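/- arXiv:2205.15191 — 5 statements merged into one kernel-verified Lean document; each statement's English description precedes it below -/
import Mathlib

section
/- Let n ≥ 2 and let a, b : {1,…,n}×{1,…,n} → ℝ. Suppose a is normalized: ∑_{j=1}^n a_{ij} = 0 for every i, and ∑_{i=1}^n a_{ij} = 0 for every j. Define f, g : S_n → ℝ by f(σ) = ∑_{i=1}^n a_{i,σ(i)} and g(σ) = ∑_{i=1}^n b_{i,σ(i)}. Then (1/n!)·∑_{σ∈S_n} f(σ)·g(σ) = (∑_{i,j=1}^n a_{ij}·b_{ij})/(n−1). -/
open Equiv Finset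

lemma L0' (m : ℕ) (F : Fin (m+1) → ℝ) :
    ∑ σ : Equiv.Perm (Fin (m+1)), F (σ 0) = m.factorial * ∑ j, F j := by
  rw [← Equiv.sum_comp Equiv.Perm.decomposeFin.symm (fun σ => F (σ 0)), Fintype.sum_prod_type]
  simp [Equiv.Perm.decomposeFin_symm_apply_zero, Fintype.card_perm, mul_comm, Finset.mul_sum]

lemma L1' (m : ℕ) (i : Fin (m+1)) (F : Fin (m+1) → ℝ) :
    ∑ σ : Equiv.Perm (Fin (m+1)), F (σ i) = m.factorial * ∑ j, F j := by
  rw [← Equiv.sum_comp (Equiv.mulRight (Equiv.swap 0 i)) (fun σ => F (σ i))]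
  simp only [Equiv.coe_mulRight, Equiv.Perm.mul_apply, Equiv.swap_apply_right]
  exact L0' m F

lemma L2' (m : ℕ) (i k : Fin (m+2)) (h : i ≠ k) (F : Fin (m+2) → Fin (m+2) → ℝ) :
    ∑ σ : Equiv.Perm (Fin (m+2)), F (σ i) (σ k) =
      m.factorial * ∑ j, ((∑ l, F j l) - F j j) := by
  set k2 : Fin (m+2) := Equiv.swap 0 i k with hk2
  have hk2ne : k2 ≠ 0 := by
    simp only [hk2, ne_eq]
    intro hc
    exact h ((Equiv.swap 0 i).injective (by simpa [Equiv.swap_apply_left] using hc)).symm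
  set ρ : Equiv.Perm (Fin (m+2)) := Equiv.swap 0 i * Equiv.swap 1 k2 with hρ
  have hρ0 : ρ 0 = i := by
    simp [hρ, Equiv.Perm.mul_apply,
      Equiv.swap_apply_of_ne_of_ne (by norm_num : (0 : Fin (m+2)) ≠ 1) hk2ne.symm]
  have hρ1 : ρ 1 = k := by
    simp [hρ, Equiv.Perm.mul_apply, Equiv.swap_apply_left, hk2]
  have step1 : ∑ σ : Equiv.Perm (Fin (m+2)), F (σ i) (σ k)
      = ∑ σ : Equiv.Perm (Fin (m+2)), F (σ 0) (σ 1) := by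
    rw [← Equiv.sum_comp (Equiv.mulRight ρ) (fun σ => F (σ 0) (σ 1))]
    simp only [Equiv.coe_mulRight, Equiv.Perm.mul_apply, hρ0, hρ1]
  rw [step1, ← Equiv.sum_comp Equiv.Perm.decomposeFin.symm (fun σ => F (σ 0) (σ 1)),
    Fintype.sum_prod_type]
  simp only [Equiv.Perm.decomposeFin_symm_apply_zero, Equiv.Perm.decomposeFin_symm_apply_one]
  rw [Finset.mul_sum]
  refine Finset.sum_congr rfl fun p _ => ?_
  rw [L0' m (fun q => F p (Equiv.swap 0 p q.succ))]
  congr 1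
  have : ∑ l : Fin (m+2), F p (Equiv.swap 0 p l)
      = F p (Equiv.swap 0 p 0) + ∑ q : Fin (m+1), F p (Equiv.swap 0 p q.succ) :=
    Fin.sum_univ_succ _
  rw [Equiv.sum_comp (Equiv.swap 0 p) (fun l => F p l)] at this
  simp only [Equiv.swap_apply_left] at this
  linarith


abbrev Perm' (n : ℕ) := Equiv.Perm (Fin n)

/-- Parseval-type formula: if `f(σ) = ∑_i a_{i,σ(i)}` is a linear function in normalized
form (all row and column sums of `a` vanish) and `g(σ) = ∑_i b_{i,σ(i)}` is an arbitrary
linear function, then `⟨f,g⟩ = (∑_{i,j} a_{ij} b_{ij}) / (n-1)`. -/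
theorem linear_inner_product_formula (n : ℕ) (hn : 2 ≤ n)
    (a b : Fin n → Fin n → ℝ)
    (hrow : ∀ i, ∑ j, a i j = 0) (hcol : ∀ j, ∑ i, a i j = 0) :
    (∑ σ : Perm' n, (∑ i, a i (σ i)) * (∑ i, b i (σ i))) / n.factorial =
      (∑ i, ∑ j, a i j * b i j) / ((n : ℝ) - 1) := by
  obtain ⟨m, rfl⟩ : ∃ m, n = m + 2 := ⟨n - 2, by omega⟩
  set S : ℝ := ∑ i, ∑ j, a i j * b i j with hS
  -- value of each pairwise sum over σ
  have key : ∀ i k : Fin (m+2), (∑ σ : Perm' (m+2), a i (σ i) * b k (σ k)) =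
      if k = i then ((m+1).factorial : ℝ) * ∑ j, a i j * b i j
      else -(m.factorial : ℝ) * ∑ j, a i j * b k j := by
    intro i k
    by_cases hik : k = i
    · subst hik
      rw [if_pos rfl]
      exact L1' (m+1) k (fun j => a k j * b k j)
    · rw [if_neg hik, L2' m i k (fun h' => hik h'.symm) (fun j l => a i j * b k l)]
      have : ∀ j : Fin (m+2), (∑ l, a i j * b k l) - a i j * b k j
          = a i j * (∑ l, b k l) - a i j * b k j := by
        intro j; rw [← Finset.mul_sum]
      simp only [this]
      rw [Finset.sum_sub_distrib]
      have h1 : ∑ j, a i j * (∑ l, b k l) = (∑ j, a i j) * (∑ l, b k l) := by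
        rw [Finset.sum_mul]
      rw [h1, hrow i]
      ring
  -- compute the big numerator
  have numer : (∑ σ : Perm' (m+2), (∑ i, a i (σ i)) * (∑ i, b i (σ i)))
      = ((m+1).factorial : ℝ) * S + (m.factorial : ℝ) * S := by
    have expand : (∑ σ : Perm' (m+2), (∑ i, a i (σ i)) * (∑ i, b i (σ i)))
        = ∑ i, ∑ k, ∑ σ : Perm' (m+2), a i (σ i) * b k (σ k) := by
      simp_rw [Finset.sum_mul_sum]
      rw [Finset.sum_comm]
      exact Finset.sum_congr rfl fun i _ => Finset.sum_comm
    rw [expand]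
    simp_rw [key]
    have inner : ∀ i : Fin (m+2),
        (∑ k, if k = i then ((m+1).factorial : ℝ) * ∑ j, a i j * b i j
          else -(m.factorial : ℝ) * ∑ j, a i j * b k j)
        = (∑ k, -(m.factorial : ℝ) * ∑ j, a i j * b k j)
          + (((m+1).factorial : ℝ) * ∑ j, a i j * b i j
             - (-(m.factorial : ℝ) * ∑ j, a i j * b i j)) := by
      intro i
      have : ∀ k : Fin (m+2), (if k = i then ((m+1).factorial : ℝ) * ∑ j, a i j * b i j
            else -(m.factorial : ℝ) * ∑ j, a i j * b k j)
          = (-(m.factorial : ℝ) * ∑ j, a i j * b k j)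
            + (if k = i then ((m+1).factorial : ℝ) * ∑ j, a i j * b i j
               - (-(m.factorial : ℝ) * ∑ j, a i j * b i j) else 0) := by
        intro k
        by_cases h : k = i
        · subst h; simp
        · simp [h]
      simp_rw [this]
      rw [Finset.sum_add_distrib, Finset.sum_ite_eq' univ i]
      simp
    simp_rw [inner]
    rw [Finset.sum_add_distrib]
    have hzero : (∑ i, ∑ k, -(m.factorial : ℝ) * ∑ j, a i j * b k j) = 0 := by
      have step : (∑ i, ∑ k, -(m.factorial : ℝ) * ∑ j, a i j * b k j)
          = ∑ k, ∑ j, (-(m.factorial : ℝ)) * ((∑ i : Fin (m+2), a i j) * b k j) := by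
        rw [Finset.sum_comm]
        refine Finset.sum_congr rfl fun k _ => ?_
        rw [← Finset.mul_sum, ← Finset.mul_sum]
        congr 1
        rw [Finset.sum_comm]
        exact Finset.sum_congr rfl fun j _ => (Finset.sum_mul ..).symm
      rw [step]
      simp only [hcol, zero_mul, mul_zero, Finset.sum_const_zero]
    rw [hzero, zero_add]
    simp only [neg_mul, sub_neg_eq_add]
    rw [Finset.sum_add_distrib, ← Finset.mul_sum, ← Finset.mul_sum, hS]
  -- finish with arithmetic
  rw [numer]
  have h1 : (((m+1).factorial : ℝ)) = (m+1) * m.factorial := by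
    rw [Nat.factorial_succ]; push_cast; ring
  have h2 : (((m+2).factorial : ℝ)) = (m+2) * ((m+1) * m.factorial) := by
    rw [Nat.factorial_succ, Nat.factorial_succ]; push_cast; ring
  have hm : (m.factorial : ℝ) ≠ 0 := by positivity
  have hm1 : ((m : ℝ) + 1) ≠ 0 := by positivity
  have hm2 : ((m : ℝ) + 2) ≠ 0 := by positivity
  rw [h1, h2]
  push_cast
  have hc : ((m : ℝ) + 2) - 1 = (m : ℝ) + 1 := by ring
  rw [hc]
  field_simp
  ring
end

section
/- Let n ≥ 2 and f : S_n → ℝ. Define a_{ij} := ((n−1)/n)·(E[f | σ(i)=j] − E[f]) for i, j ∈ {1,…,n}, and f_a : S_n → ℝ by f_a(σ) = ∑_{i=1}^n a_{i,σ(i)}. Then: (1) ∑_{j=1}^n a_{ij} = 0 for every i and ∑_{i=1}^n a_{ij} = 0 for every j (i.e. the coefficient matrix is normalized); (2) for every b : {1,…,n}×{1,…,n} → ℝ such that the linear function g(σ) := ∑_{i=1}^n b_{i,σ(i)} has E[g] = 0, one has (1/n!)·∑_{σ∈S_n} f(σ)·g(σ) = (1/n!)·∑_{σ∈S_n} f_a(σ)·g(σ).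 (Consequently f_a is the orthogonal projection of f onto the space of mean-zero linear functions on S_n.) -/
open Equiv Finset

/-- `E[f] = (1/n!)·∑_σ f(σ)`, the expectation of `f` over the uniform measure on `Sₙ`. -/
noncomputable def expectation {n : ℕ} (f : Perm' n → ℝ) : ℝ :=
  (∑ σ : Perm' n, f σ) / n.factorial

/-- `E[f | σ(i) = j] = (1/(n-1)!)·∑_{σ : σ(i) = j} f(σ)`. -/
noncomputable def condExpectation {n : ℕ} (f : Perm' n → ℝ) (i j : Fin n) : ℝ :=
  (∑ σ ∈ Finset.univ.filter fun σ : Perm' n => σ i = j, f σ) / (n - 1).factorial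

/-- The coefficients `a_{ij}(f) = ((n-1)/n)·(E[f | σ(i)=j] − E[f])`. -/
noncomputable def coeff {n : ℕ} (f : Perm' n → ℝ) (i j : Fin n) : ℝ :=
  ((n : ℝ) - 1) / n * (condExpectation f i j - expectation f)

/-!
Write `S_{ij}(h) = ∑_{σ(i)=j} h(σ)`. Pairing `h` with `σ ↦ ∑_i b_{i,σ(i)}` gives
`∑_{i,j} b_{ij} S_{ij}(h)`. For a matrix `a` with vanishing row and column sums, counting the
`(n-2)!` permutations with `σ(i) = j`, `σ(k) = l` (`i ≠ k`, `j ≠ l`) gives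
`S_{ij}(f_a) = ((n-1)! + (n-2)!) a_{ij}`; with `a = coeff f` the factor `(n-1)/n` turns this into
`(n-1)! (E[f | σ(i)=j] - E[f]) = S_{ij}(f) - (n-1)! E[f]`. So `S_{ij}(f) - S_{ij}(f_a)` does not
depend on `(i, j)`, and it is annihilated by `b` because `E[g] = 0` forces `∑_{i,j} b_{ij} = 0`.
-/

open scoped Nat

namespace Equiv.Perm

variable {α : Type*} [DecidableEq α]

theorem card_filter_apply_eq_of_swap_mul_mem {s : Finset (Perm α)} {l l' : α}
    (hs : ∀ σ ∈ s, swap l l' * σ ∈ s) (k : α) :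
    #{σ ∈ s | σ k = l} = #{σ ∈ s | σ k = l'} := by
  refine card_nbij' (swap l l' * ·) (swap l l' * ·) ?_ ?_ ?_ ?_ <;>
    intro σ <;> simp +contextual [hs, swap_apply_left, swap_apply_right]

variable [Fintype α]

theorem card_filter_apply_eq (i j : α) : #{σ : Perm α | σ i = j} = (Fintype.card α - 1)! := by
  have hN : 0 < Fintype.card α := Fintype.card_pos_iff.mpr ⟨i⟩
  have hfibers : (Fintype.card α)! = Fintype.card α * #{σ : Perm α | σ i = j} := by
    rw [← Fintype.card_perm, ← card_univ,
      card_eq_sum_card_fiberwise (f := fun σ : Perm α => σ i) (t := univ) (by simp),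
      sum_congr rfl fun l _ => card_filter_apply_eq_of_swap_mul_mem (by simp) i, sum_const,
      card_univ, smul_eq_mul]
  rw [← Nat.mul_factorial_pred hN.ne'] at hfibers
  exact (Nat.eq_of_mul_eq_mul_left hN hfibers).symm

theorem filter_apply_eq_and_apply_eq_self {i k : α} (hik : i ≠ k) (j : α) :
    ({σ : Perm α | σ i = j ∧ σ k = j} : Finset (Perm α)) = ∅ :=
  filter_eq_empty_iff.mpr fun σ _ hσ => hik (σ.injective (hσ.1.trans hσ.2.symm))

theorem card_filter_apply_eq_and_apply_eq {i k j l : α} (hik : i ≠ k) (hjl : j ≠ l) :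
    #{σ : Perm α | σ i = j ∧ σ k = l} = (Fintype.card α - 2)! := by
  set s : Finset (Perm α) := {σ | σ i = j}
  have hN : 2 ≤ Fintype.card α := Fintype.one_lt_card_iff.mpr ⟨i, k, hik⟩
  have hs : ∀ l', #{σ : Perm α | σ i = j ∧ σ k = l'} = #{σ ∈ s | σ k = l'} := by
    simp [s, filter_filter]
  have hj : #{σ ∈ s | σ k = j} = 0 := by
    rw [← hs, filter_apply_eq_and_apply_eq_self hik, card_empty]
  have hfibers : (Fintype.card α - 1)! = (Fintype.card α - 1) * #{σ ∈ s | σ k = l} := by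
    rw [← card_filter_apply_eq i j, card_eq_sum_card_fiberwise (f := fun σ : Perm α => σ k)
      (t := univ) (by simp), ← add_sum_erase _ _ (mem_univ j), hj, zero_add]
    rw [sum_congr rfl fun l' hl' => card_filter_apply_eq_of_swap_mul_mem (l' := l) ?_ k]
    · simp [s]
    · intro σ hσ
      simp_all [s, swap_apply_of_ne_of_ne (ne_of_mem_erase hl').symm hjl]
  have hpred : (Fintype.card α - 1)! = (Fintype.card α - 1) * (Fintype.card α - 2)! := by
    rw [← Nat.mul_factorial_pred (by omega), Nat.sub_sub]
  rw [hs, ← Nat.eq_of_mul_eq_mul_left (by omega : 0 < Fintype.card α - 1)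
    (hpred.symm.trans hfibers)]

theorem sum_filter_apply_eq_comp_apply_of_ne {M : Type*} [AddCommGroup M] {i k : α} (hik : i ≠ k)
    (j : α) (a : α → M) :
    ∑ σ : Perm α with σ i = j, a (σ k) = (Fintype.card α - 2)! • (∑ l, a l - a j) := by
  rw [← sum_fiberwise _ (fun σ : Perm α => σ k), ← add_sum_erase _ _ (mem_univ j)]
  have hj : ∑ σ ∈ {σ : Perm α | σ i = j} with σ k = j, a (σ k) = 0 := by
    rw [filter_filter, filter_apply_eq_and_apply_eq_self hik, sum_empty]
  have hl : ∀ l ∈ univ.erase j,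
      ∑ σ ∈ {σ : Perm α | σ i = j} with σ k = l, a (σ k) = (Fintype.card α - 2)! • a l := by
    intro l hl
    rw [sum_congr rfl fun σ hσ => by rw [(mem_filter.mp hσ).2], sum_const, filter_filter,
      card_filter_apply_eq_and_apply_eq hik (ne_of_mem_erase hl).symm]
  rw [hj, zero_add, sum_congr rfl hl, ← smul_sum, sum_erase_eq_sub (mem_univ j)]

theorem sum_filter_apply_eq_sum_apply_of_sum_eq_zero {M : Type*} [AddCommGroup M]
    {a : α → α → M} (hrow : ∀ k, ∑ l, a k l = 0) (hcol : ∀ l, ∑ k, a k l = 0) (i j : α) :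
    ∑ σ : Perm α with σ i = j, ∑ k, a k (σ k) =
      ((Fintype.card α - 1)! + (Fintype.card α - 2)!) • a i j := by
  have hself : ∑ σ : Perm α with σ i = j, a i (σ i) = (Fintype.card α - 1)! • a i j := by
    rw [sum_congr rfl fun σ hσ => by rw [(mem_filter.mp hσ).2], sum_const, card_filter_apply_eq]
  have hcol' : ∑ k ∈ univ.erase i, a k j = -a i j := by
    rw [sum_erase_eq_sub (mem_univ i), hcol, zero_sub]
  rw [sum_comm, ← add_sum_erase _ _ (mem_univ i), hself,
    sum_congr rfl fun k hk =>
      sum_filter_apply_eq_comp_apply_of_ne (ne_of_mem_erase hk).symm j (a k)]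
  simp only [hrow, zero_sub, smul_neg, sum_neg_distrib, ← smul_sum, hcol', neg_neg, add_smul]

theorem sum_sum_filter_apply_eq_left {M : Type*} [AddCommMonoid M] (h : Perm α → M) (j : α) :
    ∑ i, ∑ σ : Perm α with σ i = j, h σ = ∑ σ, h σ := by
  have := sum_fiberwise univ (fun σ : Perm α => σ⁻¹ j) h
  simpa only [inv_eq_iff_eq, eq_comm (a := j)] using this

theorem sum_mul_sum_apply {R : Type*} [CommSemiring R] (h : Perm α → R) (b : α → α → R) :
    ∑ σ, h σ * ∑ i, b i (σ i) = ∑ i, ∑ j, b i j * ∑ σ : Perm α with σ i = j, h σ := by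
  simp_rw [mul_sum]
  rw [sum_comm]
  refine sum_congr rfl fun i _ => ?_
  rw [← sum_fiberwise _ (fun σ : Perm α => σ i)]
  exact sum_congr rfl fun j _ => sum_congr rfl fun σ hσ => by rw [(mem_filter.mp hσ).2, mul_comm]

theorem sum_sum_apply {R : Type*} [CommSemiring R] (b : α → α → R) :
    ∑ σ : Perm α, ∑ i, b i (σ i) = (Fintype.card α - 1)! * ∑ i, ∑ j, b i j := by
  rw [mul_comm, sum_mul]
  simpa [card_filter_apply_eq, sum_mul] using sum_mul_sum_apply (fun _ => (1 : R)) b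

end Equiv.Perm

theorem div_factorial_pred_eq_mul_div_factorial {K : Type*} [Field K] [CharZero K] {n : ℕ}
    (hn : n ≠ 0) (x : K) : x / (n - 1)! = n * (x / n !) := by
  rw [← Nat.mul_factorial_pred hn, Nat.cast_mul]
  field_simp

variable {n : ℕ}

theorem sum_condExpectation_right (f : Perm' n → ℝ) (i : Fin n) :
    ∑ j, condExpectation f i j = n * expectation f := by
  simp only [condExpectation]
  rw [expectation, ← sum_div, sum_fiberwise,
    div_factorial_pred_eq_mul_div_factorial i.pos.ne']

theorem sum_condExpectation_left (f : Perm' n → ℝ) (j : Fin n) :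
    ∑ i, condExpectation f i j = n * expectation f := by
  simp only [condExpectation]
  rw [expectation, ← sum_div, Perm.sum_sum_filter_apply_eq_left,
    div_factorial_pred_eq_mul_div_factorial j.pos.ne']

theorem sum_coeff_right (f : Perm' n → ℝ) (i : Fin n) : ∑ j, coeff f i j = 0 := by
  simp [coeff, ← mul_sum, sum_sub_distrib, sum_condExpectation_right]

theorem sum_coeff_left (f : Perm' n → ℝ) (j : Fin n) : ∑ i, coeff f i j = 0 := by
  simp [coeff, ← mul_sum, sum_sub_distrib, sum_condExpectation_left]

theorem sum_filter_apply_eq_sum_coeff (hn : 2 ≤ n) (f : Perm' n → ℝ) (i j : Fin n) :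
    ∑ σ : Perm' n with σ i = j, ∑ k, coeff f k (σ k) =
      ∑ σ : Perm' n with σ i = j, f σ - (n - 1)! * expectation f := by
  have hpred : ((n - 1)! : ℝ) = (n - 1) * (n - 2)! := by
    rw [← Nat.mul_factorial_pred (by omega : n - 1 ≠ 0), Nat.sub_sub, Nat.cast_mul,
      Nat.cast_sub (by omega : 1 ≤ n), Nat.cast_one]
  have hscale : ((n - 1)! + (n - 2)! : ℝ) * (((n : ℝ) - 1) / n) = (n - 1)! := by
    rw [hpred]
    field_simp
    ring
  rw [Perm.sum_filter_apply_eq_sum_apply_of_sum_eq_zero (sum_coeff_right f) (sum_coeff_left f),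
    Fintype.card_fin, nsmul_eq_mul, coeff, ← mul_assoc, Nat.cast_add, hscale, mul_sub,
    condExpectation, mul_div_cancel₀ _ (by positivity)]

/-- The coefficients `a_{ij}(f)` form a normalized matrix, and the linear function
`f_a(σ) = ∑_i a_{i,σ(i)}(f)` has the same inner product as `f` with every mean-zero
linear function; i.e. `f_a` is the normalized form of the level-1 projection of `f`. -/
theorem normalized_form_of_level_one (n : ℕ) (hn : 2 ≤ n) (f : Perm' n → ℝ) :
    (∀ i, ∑ j, coeff f i j = 0) ∧ (∀ j, ∑ i, coeff f i j = 0) ∧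
    ∀ b : Fin n → Fin n → ℝ,
      (∑ σ : Perm' n, ∑ i, b i (σ i)) / n.factorial = 0 →
      (∑ σ : Perm' n, f σ * ∑ i, b i (σ i)) / n.factorial =
        (∑ σ : Perm' n, (∑ i, coeff f i (σ i)) * ∑ i, b i (σ i)) / n.factorial := by
  refine ⟨sum_coeff_right f, sum_coeff_left f, fun b hmean => ?_⟩
  have hb : ∑ i, ∑ j, b i j = 0 := by
    simpa [Perm.sum_sum_apply, Nat.factorial_ne_zero] using hmean
  congr 1
  simp only [Perm.sum_mul_sum_apply, sum_filter_apply_eq_sum_coeff hn, mul_sub, sum_sub_distrib,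
    ← sum_mul, hb, zero_mul, sub_zero]
end

section
/- Let n ≥ 2, let a : {1,…,n}×{1,…,n} → ℝ, and define g : S_n → ℝ by g(σ) = ∑_{i,j=1}^n a_{ij}·(x_{i→j}(σ) − 1/n), i.e. g(σ) = ∑_{i=1}^n a_{i,σ(i)} − (1/n)·∑_{i,j=1}^n a_{ij}. Then (1/n!)·∑_{σ∈S_n} g(σ)² ≤ (8/n)·∑_{i,j=1}^n a_{ij}². -/
/-!
Centre each row, `c i j = a i j - (∑ j, a i j) / n`. Then `g σ = ∑ i, c i (σ i)`, and centring
does not increase `∑ ∑ c²`. Under a uniformly random permutation, `σ i` is uniform and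
`(σ i, σ k)` for `i ≠ k` is uniform on pairs of distinct points. So expanding `g²` gives, for
zero row sums, the exact identity `n (n - 1) 𝔼 g² = n ∑ ∑ c² - ∑ j, (∑ i, c i j)²`. Hence
`𝔼 g² ≤ ∑ ∑ c² / (n - 1) ≤ (2 / n) ∑ ∑ a²`.
-/

open Equiv Finset

open scoped Nat

theorem Finset.sum_offDiag_eq_sub {ι M : Type*} [DecidableEq ι] [AddCommGroup M]
    (s : Finset ι) (f : ι → ι → M) :
    ∑ x ∈ s.offDiag, f x.1 x.2 = ∑ i ∈ s, ∑ j ∈ s, f i j - ∑ i ∈ s, f i i := by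
  rw [← sum_product', ← diag_union_offDiag, sum_union (disjoint_diag_offDiag s), sum_diag]
  abel

theorem Fintype.sum_sub_mean_sq_le {ι K : Type*} [Fintype ι] [Field K] [LinearOrder K]
    [IsStrictOrderedRing K] (x : ι → K) :
    ∑ j, (x j - (∑ j, x j) / Fintype.card ι) ^ 2 ≤ ∑ j, x j ^ 2 := by
  rcases isEmpty_or_nonempty ι with hι | hι
  · simp
  have hn : (0 : K) < Fintype.card ι := by exact_mod_cast Fintype.card_pos
  have hexpand : ∑ j, (x j - (∑ j, x j) / Fintype.card ι) ^ 2 =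
      ∑ j, x j ^ 2 - (∑ j, x j) ^ 2 / Fintype.card ι := by
    simp only [sub_sq, sum_add_distrib, sum_sub_distrib, ← sum_mul, ← mul_sum, sum_const,
      card_univ, nsmul_eq_mul]
    field_simp
    ring
  rw [hexpand, sub_le_self_iff]
  positivity

namespace Equiv.Perm

variable {α : Type*} [Fintype α] [DecidableEq α]

section AddCommMonoid

variable {M : Type*} [AddCommMonoid M]

theorem sum_comp_apply_eq (f : α → M) (i j : α) :
    ∑ σ : Perm α, f (σ i) = ∑ σ : Perm α, f (σ j) :=
  Fintype.sum_equiv (Equiv.mulRight (swap i j)) _ _ fun σ => by simp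

theorem card_smul_sum_comp_apply (f : α → M) (i : α) :
    Fintype.card α • ∑ σ : Perm α, f (σ i) = (Fintype.card α)! • ∑ j, f j :=
  calc Fintype.card α • ∑ σ : Perm α, f (σ i)
      = ∑ k : α, ∑ σ : Perm α, f (σ k) := by simp [sum_comp_apply_eq f _ i]
    _ = ∑ σ : Perm α, ∑ k, f (σ k) := sum_comm
    _ = (Fintype.card α)! • ∑ j, f j := by simp [Equiv.sum_comp, Fintype.card_perm]

theorem sum_comp_apply₂_eq (F : α → α → M) {i k i' k' : α} (h : i ≠ k) (h' : i' ≠ k') :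
    ∑ σ : Perm α, F (σ i) (σ k) = ∑ σ : Perm α, F (σ i') (σ k') := by
  obtain ⟨τ, hτ⟩ := exists_extending_pair ![i', k'] ![i, k]
    (by simp [Function.Injective, Fin.forall_fin_two, h', h'.symm])
    (by simp [Function.Injective, Fin.forall_fin_two, h, h.symm])
  refine Fintype.sum_equiv (Equiv.mulRight τ) _ _ fun σ => ?_
  simpa using congrArg₂ F (congrArg σ (hτ 0)).symm (congrArg σ (hτ 1)).symm

theorem card_mul_sub_one_smul_sum_comp_apply₂ (F : α → α → M) {i k : α} (h : i ≠ k) :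
    (Fintype.card α * (Fintype.card α - 1)) • ∑ σ : Perm α, F (σ i) (σ k) =
      (Fintype.card α)! • ∑ x ∈ univ.offDiag, F x.1 x.2 :=
  calc (Fintype.card α * (Fintype.card α - 1)) • ∑ σ : Perm α, F (σ i) (σ k)
      = ∑ x ∈ univ.offDiag, ∑ σ : Perm α, F (σ x.1) (σ x.2) := by
        rw [Nat.mul_sub_one, ← Finset.card_univ, ← offDiag_card, ← sum_const]
        exact sum_congr rfl fun x hx => sum_comp_apply₂_eq F h (mem_offDiag.1 hx).2.2
    _ = ∑ σ : Perm α, ∑ x ∈ univ.offDiag, F (σ x.1) (σ x.2) := sum_comm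
    _ = ∑ σ : Perm α, ∑ x ∈ univ.offDiag, F x.1 x.2 :=
        sum_congr rfl fun σ _ => sum_equiv (σ.prodCongr σ) (by simp) fun _ _ => rfl
    _ = (Fintype.card α)! • ∑ x ∈ univ.offDiag, F x.1 x.2 := by simp [Fintype.card_perm]

end AddCommMonoid

theorem card_mul_sub_one_mul_sum_sq_sum_comp_apply {R : Type*} [CommRing R] (c : α → α → R)
    (hc : ∀ i, ∑ j, c i j = 0) :
    (Fintype.card α : R) * (Fintype.card α - 1) * ∑ σ : Perm α, (∑ i, c i (σ i)) ^ 2 =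
      (Fintype.card α)! * (Fintype.card α * ∑ i, ∑ j, c i j ^ 2 - ∑ j, (∑ i, c i j) ^ 2) := by
  rcases isEmpty_or_nonempty α with hα | hα
  · simp
  have hn : 1 ≤ Fintype.card α := Fintype.card_pos
  set X : α → α → R := fun i k => ∑ σ : Perm α, c i (σ i) * c k (σ k)
  have hsplit : ∑ σ : Perm α, (∑ i, c i (σ i)) ^ 2 =
      ∑ i, X i i + ∑ x ∈ univ.offDiag, X x.1 x.2 := by
    rw [sum_offDiag_eq_sub, add_sub_cancel]
    simp only [X, sq, sum_mul_sum]
    rw [sum_comm]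
    exact sum_congr rfl fun i _ => sum_comm
  have hdiag : (Fintype.card α : R) * ∑ i, X i i = (Fintype.card α)! * ∑ i, ∑ j, c i j ^ 2 := by
    rw [mul_sum, mul_sum]
    refine sum_congr rfl fun i _ => ?_
    simpa [sq, nsmul_eq_mul] using card_smul_sum_comp_apply (fun j => c i j * c i j) i
  have hoff : (Fintype.card α : R) * (Fintype.card α - 1) * ∑ x ∈ univ.offDiag, X x.1 x.2 =
      -(Fintype.card α)! * ∑ x ∈ univ.offDiag, ∑ j, c x.1 j * c x.2 j := by
    simp only [mul_sum]
    refine sum_congr rfl fun x hx => ?_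
    have := card_mul_sub_one_smul_sum_comp_apply₂ (fun p q => c x.1 p * c x.2 q)
      (mem_offDiag.1 hx).2.2
    rw [sum_offDiag_eq_sub univ (fun p q => c x.1 p * c x.2 q)] at this
    push_cast [nsmul_eq_mul, Nat.cast_sub hn] at this
    simpa [← mul_sum, ← sum_mul, hc] using this
  have hcross : ∑ x ∈ univ.offDiag, ∑ j, c x.1 j * c x.2 j =
      ∑ j, (∑ i, c i j) ^ 2 - ∑ i, ∑ j, c i j ^ 2 := by
    rw [sum_offDiag_eq_sub univ (fun i k => ∑ j, c i j * c k j)]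
    simp only [sq, sum_mul_sum]
    congr 1
    exact (sum_congr rfl fun i _ => sum_comm).trans sum_comm
  linear_combination ((Fintype.card α : R) - 1) * hdiag + hoff - (Fintype.card α)! * hcross +
    (Fintype.card α : R) * (Fintype.card α - 1) * hsplit

theorem card_sub_one_mul_sum_sq_sum_comp_apply_le {R : Type*} [CommRing R] [LinearOrder R]
    [IsStrictOrderedRing R] (c : α → α → R) (hc : ∀ i, ∑ j, c i j = 0) :
    (Fintype.card α - 1 : R) * ∑ σ : Perm α, (∑ i, c i (σ i)) ^ 2 ≤
      (Fintype.card α)! * ∑ i, ∑ j, c i j ^ 2 := by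
  rcases isEmpty_or_nonempty α with hα | hα
  · simp
  have hn : (0 : R) < Fintype.card α := by exact_mod_cast Fintype.card_pos
  have hid := card_mul_sub_one_mul_sum_sq_sum_comp_apply c hc
  have hQ : 0 ≤ ∑ j, (∑ i, c i j) ^ 2 := sum_nonneg fun j _ => sq_nonneg _
  have hfac : (0 : R) ≤ (Fintype.card α)! := by positivity
  refine le_of_mul_le_mul_left ?_ hn
  nlinarith

end Equiv.Perm

/-- One-sided Parseval: for `g(σ) = ∑_{i,j} a_{ij}(x_{i→j}(σ) − 1/n)`, i.e.
`g(σ) = ∑_i a_{i,σ(i)} − (1/n)∑_{i,j} a_{ij}`, we have `‖g‖₂² ≤ (8/n)·∑_{i,j} a_{ij}²`. -/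
theorem linear_function_norm_bound (n : ℕ) (hn : 2 ≤ n) (a : Fin n → Fin n → ℝ) :
    (∑ σ : Perm' n, ((∑ i, a i (σ i)) - (∑ i, ∑ j, a i j) / n) ^ 2) / n.factorial ≤
      8 / n * ∑ i, ∑ j, a i j ^ 2 := by
  have hn' : (2 : ℝ) ≤ n := by exact_mod_cast hn
  set c : Fin n → Fin n → ℝ := fun i j => a i j - (∑ j, a i j) / n
  have hrow : ∀ i, ∑ j, c i j = 0 := fun i => by
    simp [c, sum_sub_distrib, mul_div_cancel₀ _ (by positivity : (n : ℝ) ≠ 0)]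
  have hcentre : ∀ σ : Perm' n, (∑ i, a i (σ i)) - (∑ i, ∑ j, a i j) / n = ∑ i, c i (σ i) := by
    simp [c, sum_sub_distrib, sum_div]
  have hc : ∑ i, ∑ j, c i j ^ 2 ≤ ∑ i, ∑ j, a i j ^ 2 :=
    sum_le_sum fun i _ => by simpa using Fintype.sum_sub_mean_sq_le (a i)
  have hbound := Equiv.Perm.card_sub_one_mul_sum_sq_sum_comp_apply_le c hrow
  rw [Fintype.card_fin] at hbound
  have hX : 0 ≤ ∑ σ : Perm' n, (∑ i, c i (σ i)) ^ 2 := sum_nonneg fun σ _ => sq_nonneg _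
  have hfac : (0 : ℝ) < n ! := by positivity
  simp only [hcentre]
  rw [div_le_iff₀ hfac, div_mul_eq_mul_div, div_mul_eq_mul_div, le_div_iff₀ (by positivity)]
  nlinarith [mul_le_mul_of_nonneg_left hc hfac.le, mul_nonneg (sub_nonneg.2 hn') hX,
    sum_nonneg fun i (_ : i ∈ univ) => sum_nonneg fun j (_ : j ∈ univ) => sq_nonneg (a i j)]
end

section
/- Let n ≥ 2 and let a, b, c : {1,…,n}×{1,…,n} → ℝ all be normalized, i.e. every row sum and every column sum of each of a, b, c is zero. Define f, g, h : S_n → ℝ by f(σ) = ∑_{i=1}^n a_{i,σ(i)}, g(σ) = ∑_{i=1}^n b_{i,σ(i)}, h(σ) = ∑_{i=1}^n c_{i,σ(i)}. Then (1/(n!)²)·∑_{σ,τ∈S_n} f(σ)·g(τ)·h(στ) = (1/(n−1)²)·∑_{i,j,k=1}^n b_{ij}·a_{jk}·c_{ik} (this triple sum equals the matrix inner product ⟨M_g·M_f, M_h⟩ of the coefficient matrices). -/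
/-!
Everything reduces to the first two moments of a uniformly random permutation:
`∑_σ u(σ i) = (n-1)! ∑_p u p`, and, when `∑_p u p = 0`,
`(n-1) ∑_σ u(σ i) v(σ l) = (n-1)! (n [l = i] - 1) (u ⬝ᵥ v)`.
Expanding `f(σ) h(στ)` and applying the second identity to the rows of `a` and `c` leaves, for each
`i, k`, the sum of `g(τ)` against the kernel `n [τ k = i] - 1`; applying it once more, to the rows
of `b` and an indicator vector, evaluates that sum to `n² (n-1)! b_{ki}`, using the column sums
of `b`.
-/

open Equiv Finset

open scoped Nat

namespace Equiv.Perm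

section Invariance

variable {α M : Type*} [Fintype α] [DecidableEq α] [AddCommMonoid M]

theorem sum_apply_eq_sum_apply (u : α → M) (i j : α) :
    ∑ σ : Perm α, u (σ i) = ∑ σ : Perm α, u (σ j) :=
  Fintype.sum_equiv (Equiv.mulRight (swap i j)) _ _ fun σ => by simp

theorem sum_apply_apply_eq_sum_apply_apply (w : α → α → M) {i l l' : α} (hl : l ≠ i)
    (hl' : l' ≠ i) : ∑ σ : Perm α, w (σ i) (σ l) = ∑ σ : Perm α, w (σ i) (σ l') :=
  Fintype.sum_equiv (Equiv.mulRight (swap l l')) _ _ fun σ => by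
    simp [swap_apply_of_ne_of_ne hl.symm hl'.symm]

end Invariance

section CommSemiring

variable {α R : Type*} [Fintype α] [DecidableEq α] [CommSemiring R]

theorem card_mul_sum_apply (u : α → R) (i : α) :
    (Fintype.card α : R) * ∑ σ : Perm α, u (σ i) = (Fintype.card α)! * ∑ p, u p := by
  calc (Fintype.card α : R) * ∑ σ : Perm α, u (σ i)
      = ∑ j, ∑ σ : Perm α, u (σ j) := by
        simp [sum_apply_eq_sum_apply u _ i]
    _ = ∑ σ : Perm α, ∑ j, u (σ j) := Finset.sum_comm
    _ = (Fintype.card α)! * ∑ p, u p := by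
        simp [Equiv.sum_comp, Fintype.card_perm]

end CommSemiring

variable {α K : Type*} [Fintype α] [DecidableEq α] [Field K] [CharZero K]

theorem sum_apply (u : α → K) (i : α) :
    ∑ σ : Perm α, u (σ i) = (Fintype.card α - 1)! * ∑ p, u p := by
  have hcard : Fintype.card α ≠ 0 := (Fintype.card_pos_iff.mpr ⟨i⟩).ne'
  have h := card_mul_sum_apply u i
  rw [← Nat.mul_factorial_pred hcard, Nat.cast_mul, mul_assoc] at h
  exact mul_left_cancel₀ (Nat.cast_ne_zero.mpr hcard) h

theorem sub_one_mul_sum_apply_mul_apply (u v : α → K) (hu : ∑ p, u p = 0) (i l : α) :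
    ((Fintype.card α : K) - 1) * ∑ σ : Perm α, u (σ i) * v (σ l) =
      (Fintype.card α - 1)! * ((if l = i then (Fintype.card α : K) else 0) - 1) *
        u ⬝ᵥ v := by
  have hdiag : ∑ σ : Perm α, u (σ i) * v (σ i) = (Fintype.card α - 1)! * u ⬝ᵥ v :=
    sum_apply (fun p => u p * v p) i
  -- The sums over `l ≠ i` all agree and, together with the diagonal one, add up to zero.
  rcases eq_or_ne l i with rfl | hli
  · rw [hdiag, if_pos rfl]
    ring
  have hrow : ∑ l', ∑ σ : Perm α, u (σ i) * v (σ l') = 0 := by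
    rw [Finset.sum_comm]
    simp only [← Finset.mul_sum, Equiv.sum_comp _ v]
    rw [← Finset.sum_mul, sum_apply, hu, mul_zero, zero_mul]
  have hoff : ∑ l' ∈ univ.erase i, ∑ σ : Perm α, u (σ i) * v (σ l') =
      ((Fintype.card α : K) - 1) * ∑ σ : Perm α, u (σ i) * v (σ l) := by
    rw [Finset.sum_congr rfl fun l' hl' => sum_apply_apply_eq_sum_apply_apply
      (fun p q => u p * v q) (Finset.ne_of_mem_erase hl') hli, Finset.sum_const,
      Finset.card_erase_of_mem (mem_univ i), card_univ, nsmul_eq_mul,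
      Nat.cast_pred (Fintype.card_pos_iff.mpr ⟨i⟩)]
  rw [← Finset.add_sum_erase _ _ (mem_univ i), hdiag, hoff] at hrow
  rw [if_neg hli]
  linear_combination hrow

def linearFun (a : α → α → K) (σ : Perm α) : K := ∑ i, a i (σ i)

theorem sum_linearFun (a : α → α → K) (ha : ∀ i, ∑ j, a i j = 0) :
    ∑ σ : Perm α, linearFun a σ = 0 := by
  simp only [linearFun]
  rw [Finset.sum_comm]
  simp [sum_apply, ha]

theorem sub_one_mul_sum_linearFun_mul_linearFun_mul (a c : α → α → K)
    (ha : ∀ i, ∑ j, a i j = 0) (τ : Perm α) :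
    ((Fintype.card α : K) - 1) * ∑ σ : Perm α, linearFun a σ * linearFun c (σ * τ) =
      (Fintype.card α - 1)! * ∑ i, ∑ k,
        ((if τ k = i then (Fintype.card α : K) else 0) - 1) * a i ⬝ᵥ c k := by
  calc ((Fintype.card α : K) - 1) * ∑ σ : Perm α, linearFun a σ * linearFun c (σ * τ)
      = ∑ i, ∑ k, ((Fintype.card α : K) - 1) * ∑ σ : Perm α, a i (σ i) * c k (σ (τ k)) := by
        simp only [linearFun, Perm.mul_apply, Finset.sum_mul_sum]
        simp only [Finset.mul_sum]
        rw [Finset.sum_comm]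
        exact Finset.sum_congr rfl fun i _ => Finset.sum_comm
    _ = _ := by
        simp only [sub_one_mul_sum_apply_mul_apply _ _ (ha _), Finset.mul_sum, mul_assoc]

theorem sub_one_mul_sum_linearFun_mul_ite (b : α → α → K)
    (hrow : ∀ i, ∑ j, b i j = 0) (hcol : ∀ j, ∑ i, b i j = 0) (i k : α) :
    ((Fintype.card α : K) - 1) *
        ∑ τ : Perm α, linearFun b τ * ((if τ k = i then (Fintype.card α : K) else 0) - 1) =
      (Fintype.card α : K) ^ 2 * (Fintype.card α - 1)! * b k i := by
  have hind : ((Fintype.card α : K) - 1) *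
      ∑ τ : Perm α, linearFun b τ * (Pi.single i 1 : α → K) (τ k) =
        (Fintype.card α : K) * (Fintype.card α - 1)! * b k i := by
    calc ((Fintype.card α : K) - 1) * ∑ τ : Perm α, linearFun b τ * (Pi.single i 1 : α → K) (τ k)
        = ∑ j, ((Fintype.card α : K) - 1) *
            ∑ τ : Perm α, b j (τ j) * (Pi.single i 1 : α → K) (τ k) := by
          simp only [linearFun, Finset.sum_mul, Finset.mul_sum]
          exact Finset.sum_comm
      _ = ∑ j, (Fintype.card α - 1)! * ((if k = j then (Fintype.card α : K) else 0) - 1) *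
            b j i := by
          refine Finset.sum_congr rfl fun j _ => ?_
          rw [sub_one_mul_sum_apply_mul_apply _ _ (hrow j), dotProduct_single_one]
      _ = (Fintype.card α : K) * (Fintype.card α - 1)! * b k i := by
          simp only [mul_sub, sub_mul, Finset.sum_sub_distrib, ← Finset.mul_sum, hcol, mul_ite,
            ite_mul, mul_zero, zero_mul, Finset.sum_ite_eq, mem_univ, if_true]
          ring
  have hpt : ∀ τ : Perm α, linearFun b τ * ((if τ k = i then (Fintype.card α : K) else 0) - 1) =
      (Fintype.card α : K) * (linearFun b τ * (Pi.single i 1 : α → K) (τ k)) - linearFun b τ := by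
    intro τ
    rw [Pi.single_apply]
    split_ifs <;> ring
  rw [Finset.sum_congr rfl fun τ _ => hpt τ, Finset.sum_sub_distrib, ← Finset.mul_sum,
    sum_linearFun b hrow]
  linear_combination (Fintype.card α : K) * hind

theorem sub_one_sq_mul_sum_linearFun_mul (a b c : α → α → K) (ha : ∀ i, ∑ j, a i j = 0)
    (hbrow : ∀ i, ∑ j, b i j = 0) (hbcol : ∀ j, ∑ i, b i j = 0) :
    ((Fintype.card α : K) - 1) ^ 2 *
        ∑ σ : Perm α, ∑ τ : Perm α, linearFun a σ * linearFun b τ * linearFun c (σ * τ) =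
      ((Fintype.card α)! : K) ^ 2 * ∑ i, ∑ j, ∑ k, b i j * a j k * c i k := by
  -- `0 ! ≠ 0 * (0 - 1)!`, so the empty type is set aside.
  rcases isEmpty_or_nonempty α with hα | hα
  · simp [linearFun]
  set N : K := (Fintype.card α : K)
  set F : K := (((Fintype.card α - 1)! : ℕ) : K)
  have hfac : ((Fintype.card α)! : K) = N * F := by
    rw [← Nat.mul_factorial_pred Fintype.card_ne_zero, Nat.cast_mul]
  calc (N - 1) ^ 2 *
        ∑ σ : Perm α, ∑ τ : Perm α, linearFun a σ * linearFun b τ * linearFun c (σ * τ)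
      = ∑ τ : Perm α, (N - 1) * (linearFun b τ *
          ((N - 1) * ∑ σ : Perm α, linearFun a σ * linearFun c (σ * τ))) := by
        rw [Finset.sum_comm, Finset.mul_sum]
        refine Finset.sum_congr rfl fun τ _ => ?_
        rw [Finset.mul_sum, Finset.mul_sum, Finset.mul_sum, Finset.mul_sum]
        exact Finset.sum_congr rfl fun σ _ => by ring
    _ = ∑ τ : Perm α, (N - 1) * (linearFun b τ *
          (F * ∑ i, ∑ k, ((if τ k = i then N else 0) - 1) * a i ⬝ᵥ c k)) := by
        simp only [sub_one_mul_sum_linearFun_mul_linearFun_mul a c ha, N, F]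
    _ = F * ∑ i, ∑ k, a i ⬝ᵥ c k *
          ((N - 1) * ∑ τ : Perm α, linearFun b τ * ((if τ k = i then N else 0) - 1)) := by
        simp only [Finset.mul_sum]
        rw [Finset.sum_comm]
        refine Finset.sum_congr rfl fun i _ => ?_
        rw [Finset.sum_comm]
        exact Finset.sum_congr rfl fun k _ => Finset.sum_congr rfl fun τ _ => by ring
    _ = F * ∑ i, ∑ k, a i ⬝ᵥ c k * (N ^ 2 * F * b k i) := by
        simp only [sub_one_mul_sum_linearFun_mul_ite b hbrow hbcol, N, F]
    _ = ((Fintype.card α)! : K) ^ 2 * ∑ i, ∑ j, ∑ k, b i j * a j k * c i k := by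
        rw [hfac, Finset.sum_comm, Finset.mul_sum, Finset.mul_sum]
        refine Finset.sum_congr rfl fun i _ => ?_
        rw [Finset.mul_sum, Finset.mul_sum]
        refine Finset.sum_congr rfl fun k _ => ?_
        rw [dotProduct, Finset.sum_mul, Finset.mul_sum, Finset.mul_sum]
        exact Finset.sum_congr rfl fun p _ => by ring

end Equiv.Perm

theorem linear_convolution_formula_general (n : ℕ) (hn : 2 ≤ n)
    (a b c : Fin n → Fin n → ℝ)
    (harow : ∀ i, ∑ j, a i j = 0)
    (hbrow : ∀ i, ∑ j, b i j = 0) (hbcol : ∀ j, ∑ i, b i j = 0) :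
    (∑ σ : Perm' n, ∑ τ : Perm' n,
        (∑ i, a i (σ i)) * (∑ i, b i (τ i)) * (∑ i, c i ((σ * τ) i))) /
      ((n.factorial : ℝ)) ^ 2 =
    (∑ i, ∑ j, ∑ k, b i j * a j k * c i k) / ((n : ℝ) - 1) ^ 2 := by
  have h := Perm.sub_one_sq_mul_sum_linearFun_mul a b c harow hbrow hbcol
  simp only [Perm.linearFun, Fintype.card_fin] at h
  have hn1 : (n : ℝ) - 1 ≠ 0 := by
    have : (2 : ℝ) ≤ n := by exact_mod_cast hn
    linarith
  rw [div_eq_div_iff (by positivity) (pow_ne_zero 2 hn1)]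
  linear_combination h

/-- Convolution formula: for linear functions `f, g, h` in normalized form with
coefficient matrices `a, b, c`,
`E_{σ,τ}[f(σ)g(τ)h(στ)] = (1/(n-1)²)·∑_{i,j,k} b_{ij}·a_{jk}·c_{ik}`. -/
theorem linear_convolution_formula (n : ℕ) (hn : 2 ≤ n)
    (a b c : Fin n → Fin n → ℝ)
    (harow : ∀ i, ∑ j, a i j = 0) (hacol : ∀ j, ∑ i, a i j = 0)
    (hbrow : ∀ i, ∑ j, b i j = 0) (hbcol : ∀ j, ∑ i, b i j = 0)
    (hcrow : ∀ i, ∑ j, c i j = 0) (hccol : ∀ j, ∑ i, c i j = 0) :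
    (∑ σ : Perm' n, ∑ τ : Perm' n,
        (∑ i, a i (σ i)) * (∑ i, b i (τ i)) * (∑ i, c i ((σ * τ) i))) /
      ((n.factorial : ℝ)) ^ 2 =
    (∑ i, ∑ j, ∑ k, b i j * a j k * c i k) / ((n : ℝ) - 1) ^ 2 :=
  linear_convolution_formula_general n hn a b c harow hbrow hbcol
end

section
/- There exists N such that for every n ≥ N the following holds. Let I₁, I₂, J₁, J₂ ⊆ {1,…,n} with |I₁| + |I₂| + |J₁| + |J₂| ≤ 40·√n. Let A, B, C ⊆ S_n with the triple (A,B,C) product-free. If |C ∩ 1_{I₁→J̄₁}| ≥ (1 − e^{−2000})·|1_{I₁→J̄₁}| and |B ∩ 1_{I₂→J̄₂}| ≥ (1 − e^{−2000})·|1_{I₂→J̄₂}|, then A is empty. -/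
/-!
Fix `σ ∈ A` and let `W` be the set of `τ ∈ 1_{I₂→J̄₂}` with `στ ∈ 1_{I₁→J̄₁}`. A `τ ∈ W ∩ B` has
`στ ∉ C`, so `τ ↦ στ` injects `W ∩ B` into `1_{I₁→J̄₁} \ C`, while `W \ B ⊆ 1_{I₂→J̄₂} \ B`; hence
`|W| ≤ 2e^{-2000} n!`. On the other hand `W` contains every `τ` sending `K = I₁ ∪ I₂` outside
`J = σ⁻¹(J₁) ∪ J₂`. Choosing the images of the points of `K` one after the other, with
`m = |J| + |K| ≤ 40√n`, there are at least
`(n - m)^{|K|} (n - |K|)! ≥ e^{-m²/(n-m)} n! ≥ e^{-1601} n!` of these.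
-/

open Equiv Finset

/-- The triple `(A,B,C)` is product-free: there are no `σ ∈ A`, `τ ∈ B` with `στ ∈ C`. -/
def tripleProductFree {n : ℕ} (A B C : Finset (Perm' n)) : Prop :=
  ∀ σ ∈ A, ∀ τ ∈ B, σ * τ ∉ C

/-- `1_{I→J̄} = {σ ∈ Sₙ : σ(i) ∉ J for all i ∈ I}`. -/
def avoid {n : ℕ} (I J : Finset (Fin n)) : Finset (Perm' n) :=
  Finset.univ.filter fun σ => ∀ i ∈ I, σ i ∉ J

open scoped Nat

lemma mem_avoid {n : ℕ} {I J : Finset (Fin n)} {σ : Perm' n} :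
    σ ∈ avoid I J ↔ ∀ i ∈ I, σ i ∉ J := by
  simp [avoid]

lemma card_avoid_map {n : ℕ} (I J : Finset (Fin n)) (π : Perm' n) :
    #(avoid (I.map π.toEmbedding) J) = #(avoid I J) := by
  refine card_nbij' (· * π) (· * π⁻¹) ?_ ?_ (fun _ _ => by simp) (fun _ _ => by simp) <;>
    intro τ <;> simpa [mem_avoid] using fun h i hi => h _ (by simpa using hi)

lemma decomposeFin_symm_mem_avoid {n : ℕ} {I J : Finset (Fin (n + 1))} (hI : 0 ∈ I)
    (p : Fin (n + 1)) (e : Perm' n) :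
    Perm.decomposeFin.symm (p, e) ∈ avoid I J ↔
      p ∉ J ∧ e ∈ avoid (I.preimage Fin.succ (Fin.succ_injective n).injOn)
        {x | swap 0 p x.succ ∈ J} := by
  simp [mem_avoid, Fin.forall_fin_succ, Perm.decomposeFin_symm_apply_zero,
    Perm.decomposeFin_symm_apply_succ, hI]

lemma card_avoid_eq_sum {n : ℕ} {I : Finset (Fin (n + 1))} (J : Finset (Fin (n + 1)))
    (hI : 0 ∈ I) :
    #(avoid I J) = ∑ p ∈ Jᶜ,
      #(avoid (I.preimage Fin.succ (Fin.succ_injective n).injOn)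
        {x | swap 0 p x.succ ∈ J}) := by
  rw [card_eq_sum_card_fiberwise (f := fun τ => τ 0) (t := Jᶜ)
    (fun τ hτ => mem_compl.2 (mem_avoid.1 hτ 0 hI))]
  refine sum_congr rfl fun p hp => (card_nbij' (fun e => Perm.decomposeFin.symm (p, e))
    (fun τ => (Perm.decomposeFin τ).2) ?_ ?_ (fun _ _ => by simp) ?_).symm
  · intro e he
    simp_all [decomposeFin_symm_mem_avoid hI, Perm.decomposeFin_symm_apply_zero]
  all_goals
    intro τ hτ
    obtain ⟨⟨q, e⟩, rfl⟩ := Perm.decomposeFin.symm.surjective τ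
    simp only [coe_filter, Set.mem_ofPred_eq, Perm.decomposeFin_symm_apply_zero] at hτ
    obtain ⟨hτ, rfl⟩ := hτ
    simp_all [decomposeFin_symm_mem_avoid hI]

lemma card_preimage_succ_add_one {n : ℕ} (I : Finset (Fin (n + 1))) (hI : 0 ∈ I) :
    #(I.preimage Fin.succ (Fin.succ_injective n).injOn) + 1 = #I := by
  simp [card_preimage, Fin.range_succ, filter_ne', card_erase_of_mem hI,
    Nat.sub_add_cancel (card_pos.2 ⟨0, hI⟩)]

lemma card_filter_swap_succ_mem_le {n : ℕ} (J : Finset (Fin (n + 1))) (p : Fin (n + 1)) :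
    #({x | swap 0 p x.succ ∈ J} : Finset (Fin n)) ≤ #J :=
  card_le_card_of_injOn (fun x => swap 0 p x.succ) (fun x hx => by simpa using hx)
    (fun x _ y _ h => by simpa using h)

lemma pow_mul_factorial_le_card_avoid (n : ℕ) (I J : Finset (Fin n)) :
    (n - (#J + #I)) ^ #I * (n - #I)! ≤ #(avoid I J) := by
  induction n with
  | zero => simp [eq_empty_of_isEmpty I, avoid]
  | succ n ih =>
    rcases I.eq_empty_or_nonempty with rfl | ⟨a, ha⟩
    · simp [avoid, Fintype.card_perm]
    -- relabel the domain so that the first constrained point to be assigned is `0`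
    set I' := I.map (swap 0 a).toEmbedding
    rw [← card_avoid_map I J (swap 0 a), ← card_map (swap 0 a).toEmbedding (s := I)]
    have h0 : 0 ∈ I' := mem_map_equiv.2 (by simpa using ha)
    rw [card_avoid_eq_sum J h0, ← card_preimage_succ_add_one I' h0]
    set k := #(I'.preimage Fin.succ (Fin.succ_injective n).injOn)
    calc (n + 1 - (#J + (k + 1))) ^ (k + 1) * (n + 1 - (k + 1))!
        ≤ #Jᶜ * ((n - (#J + k)) ^ k * (n - k)!) := by
          rw [card_compl, Fintype.card_fin, pow_succ', mul_assoc, Nat.add_sub_add_right,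
            show n + 1 - (#J + (k + 1)) = n - (#J + k) by omega]
          gcongr <;> omega
      _ ≤ _ := card_nsmul_le_sum _ _ _ fun p _ => le_trans (by
          gcongr; exact card_filter_swap_succ_mem_le J p) (ih _ _)

lemma tripleProductFree.card_filter_mul_mem_le {n : ℕ} {A B C : Finset (Perm' n)}
    (h : tripleProductFree A B C) {σ : Perm' n} (hσ : σ ∈ A) (D E : Finset (Perm' n)) :
    #{τ ∈ E | σ * τ ∈ D} ≤ #(D \ C) + #(E \ B) := by
  rw [← card_inter_add_card_sdiff {τ ∈ E | σ * τ ∈ D} B]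
  apply add_le_add
  · refine card_le_card_of_injOn (σ * ·) (fun τ hτ => ?_) (fun _ _ _ _ => mul_left_cancel)
    simp only [coe_inter, coe_filter, Set.mem_inter_iff, Set.mem_ofPred_eq] at hτ
    exact mem_sdiff.2 ⟨hτ.1.2, h σ hσ τ hτ.2⟩
  · exact card_le_card (sdiff_subset_sdiff (filter_subset _ _) le_rfl)

lemma card_sdiff_le_mul_card {α : Type*} [Fintype α] [DecidableEq α] {C D : Finset α} {ε : ℝ}
    (hε : 0 ≤ ε) (h : (1 - ε) * #D ≤ #(C ∩ D)) : (#(D \ C) : ℝ) ≤ ε * Fintype.card α := by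
  have hsplit : (#(C ∩ D) : ℝ) + #(D \ C) = #D := by
    rw [inter_comm]; exact_mod_cast card_inter_add_card_sdiff D C
  have hD : (#D : ℝ) ≤ Fintype.card α := by exact_mod_cast card_le_univ D
  nlinarith

lemma exp_neg_le_one_sub_pow {x : ℝ} (hx1 : x < 1) (m : ℕ) :
    Real.exp (-(m * x / (1 - x))) ≤ (1 - x) ^ m := by
  have hlog := Real.one_sub_inv_le_log_of_pos (sub_pos.2 hx1)
  rw [← Real.exp_log (pow_pos (sub_pos.2 hx1) m), Real.log_pow, Real.exp_le_exp]
  have : 1 - (1 - x)⁻¹ = -(x / (1 - x)) := by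
    field_simp [(sub_pos.2 hx1).ne']
    ring
  rw [this] at hlog
  rw [mul_div_assoc, ← mul_neg]
  exact mul_le_mul_of_nonneg_left hlog m.cast_nonneg

lemma exp_neg_mul_factorial_le {n m k : ℕ} (hkm : k ≤ m) (hmn : m < n) :
    Real.exp (-(m ^ 2 / (n - m))) * n ! ≤ (((n - m) ^ k * (n - k)! : ℕ) : ℝ) := by
  have hn : (0 : ℝ) < n := by exact_mod_cast (Nat.zero_le m).trans_lt hmn
  set x : ℝ := m / n
  have hx0 : 0 ≤ x := by positivity
  have hx1 : x < 1 := (div_lt_one hn).2 (by exact_mod_cast hmn)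
  have hexp : (m : ℝ) ^ 2 / (n - m) = m * x / (1 - x) := by
    have : (n : ℝ) - m ≠ 0 := sub_ne_zero.2 (by exact_mod_cast hmn.ne')
    simp only [x]
    rw [one_sub_div hn.ne']
    field_simp
  have hfact : (n ! : ℝ) ≤ n ^ k * (n - k)! := by
    rw [← Nat.factorial_mul_descFactorial (hkm.trans hmn.le), mul_comm]
    exact_mod_cast Nat.mul_le_mul_right _ (Nat.descFactorial_le_pow n k)
  calc Real.exp (-(m ^ 2 / (n - m))) * n !
      ≤ (1 - x) ^ k * (n ^ k * (n - k)!) := by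
        rw [hexp]
        gcongr
        exact (exp_neg_le_one_sub_pow hx1 m).trans
          (pow_le_pow_of_le_one (by linarith) (by linarith) hkm)
    _ = _ := by
        push_cast [Nat.cast_sub hmn.le]
        rw [← mul_assoc, ← mul_pow, sub_mul, div_mul_cancel₀ _ hn.ne', one_mul]

lemma lt_and_sq_div_sub_le_of_le_sqrt {m n : ℝ} (hm0 : 0 ≤ m) (hm : m ≤ 40 * √n)
    (hn : 64040 ^ 2 ≤ n) : m < n ∧ m ^ 2 / (n - m) ≤ 1601 := by
  have hr : 64040 ≤ √n := Real.le_sqrt_of_sq_le hn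
  have hnr : n = √n * √n := (Real.mul_self_sqrt (by linarith)).symm
  have h1601 : 1601 * m ≤ n := by nlinarith
  refine ⟨by nlinarith, (div_le_iff₀ (by nlinarith)).2 ?_⟩
  nlinarith [mul_le_mul hm hm hm0 (by positivity)]

lemma two_mul_exp_neg_2000_lt : 2 * Real.exp (-2000) < Real.exp (-1601) := by
  have h : Real.exp (-1601) = Real.exp 399 * Real.exp (-2000) := by
    rw [← Real.exp_add]; norm_num
  rw [h]
  have := Real.add_one_le_exp 399
  nlinarith [Real.exp_pos (-2000)]

lemma exp_neg_mul_factorial_le_card_avoid {n : ℕ} (hn : 64040 ^ 2 ≤ n) {I J : Finset (Fin n)}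
    (h : ((#J + #I : ℕ) : ℝ) ≤ 40 * √n) : Real.exp (-1601) * n ! ≤ #(avoid I J) := by
  obtain ⟨hmn, hexp⟩ := lt_and_sq_div_sub_le_of_le_sqrt (Nat.cast_nonneg _) h
    (by exact_mod_cast hn)
  calc Real.exp (-1601) * n !
      ≤ Real.exp (-(((#J + #I : ℕ) : ℝ) ^ 2 / (n - (#J + #I : ℕ)))) * n ! := by gcongr
    _ ≤ _ := exp_neg_mul_factorial_le (Nat.le_add_left _ _) (by exact_mod_cast hmn)
    _ ≤ _ := by exact_mod_cast pow_mul_factorial_le_card_avoid n I J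

lemma avoid_union_subset {n : ℕ} (σ : Perm' n) (I₁ I₂ J₁ J₂ : Finset (Fin n)) :
    avoid (I₁ ∪ I₂) (J₁.map σ.symm.toEmbedding ∪ J₂) ⊆
      {τ ∈ avoid I₂ J₂ | σ * τ ∈ avoid I₁ J₁} := by
  intro τ hτ
  simp only [mem_avoid, mem_union, mem_map_equiv, symm_symm] at hτ
  simp only [mem_filter, mem_avoid, Perm.mul_apply]
  exact ⟨fun i hi hJ => hτ i (.inr hi) (.inr hJ), fun i hi hJ => hτ i (.inl hi) (.inl hJ)⟩

/-- If `(A,B,C)` is a product-free triple in `Sₙ`, `|I₁|+|I₂|+|J₁|+|J₂| ≤ 40√n`, and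
`C`, `B` occupy at least a `(1 - e^(-2000))`-fraction of `1_{I₁→J̄₁}`, `1_{I₂→J̄₂}`
respectively, then `A` is empty (for `n` sufficiently large). -/
theorem product_free_triple_with_two_huge_sets_is_trivial :
    ∃ N : ℕ, ∀ n : ℕ, N ≤ n →
    ∀ I₁ I₂ J₁ J₂ : Finset (Fin n),
    (I₁.card + I₂.card + J₁.card + J₂.card : ℝ) ≤ 40 * Real.sqrt n →
    ∀ A B C : Finset (Perm' n), tripleProductFree A B C →
    (1 - Real.exp (-2000)) * ((avoid I₁ J₁).card : ℝ) ≤ ((C ∩ avoid I₁ J₁).card : ℝ) →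
    (1 - Real.exp (-2000)) * ((avoid I₂ J₂).card : ℝ) ≤ ((B ∩ avoid I₂ J₂).card : ℝ) →
    A = ∅ := by
  refine ⟨64040 ^ 2, fun n hn I₁ I₂ J₁ J₂ hsize A B C hfree hC hB =>
    eq_empty_of_forall_notMem fun σ hσ => ?_⟩
  set K := I₁ ∪ I₂
  set J := J₁.map σ.symm.toEmbedding ∪ J₂
  have hupper : (#(avoid K J) : ℝ) ≤ 2 * Real.exp (-2000) * n ! := by
    have hcard : #(avoid K J) ≤ #(avoid I₁ J₁ \ C) + #(avoid I₂ J₂ \ B) :=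
      (card_le_card (avoid_union_subset σ I₁ I₂ J₁ J₂)).trans
        (hfree.card_filter_mul_mem_le hσ _ _)
    have h₁ := card_sdiff_le_mul_card (Real.exp_pos _).le hC
    have h₂ := card_sdiff_le_mul_card (Real.exp_pos _).le hB
    simp only [Fintype.card_perm, Fintype.card_fin] at h₁ h₂
    have : (#(avoid K J) : ℝ) ≤ #(avoid I₁ J₁ \ C) + #(avoid I₂ J₂ \ B) := by
      exact_mod_cast hcard
    linarith
  have hsmall : ((#J + #K : ℕ) : ℝ) ≤ 40 * √n := by
    have hJ : #J ≤ #J₁ + #J₂ := (card_union_le _ _).trans_eq (by rw [card_map])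
    have hK : #K ≤ #I₁ + #I₂ := card_union_le _ _
    exact le_trans (by exact_mod_cast (by omega : #J + #K ≤ #I₁ + #I₂ + #J₁ + #J₂)) hsize
  have hlower := exp_neg_mul_factorial_le_card_avoid hn hsmall
  nlinarith [two_mul_exp_neg_2000_lt, (Nat.cast_pos.2 n.factorial_pos : (0 : ℝ) < n !)]
end
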